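/- arXiv:2201.09861 — 2 statements merged into one kernel-verified Lean document; each statement's English description precedes it below -/
import Mathlib

section
/- Let X₁,…,Xₙ be independent real-valued random variables, each Xᵢ uniformly distributed on a set of kᵢ points that are pairwise at distance at least 2. Then for every integer ℓ ≥ 1 and every x ∈ ℝ, P(X₁+⋯+Xₙ ∈ (x-ℓ, x+ℓ]) ≤ P(T₁+⋯+Tₙ ∈ (-ℓ, ℓ]), where Tᵢ are independent and Tᵢ is uniform on the arithmetic progression {-kᵢ+1, -kᵢ+3, …, kᵢ-1}. -/
open MeasureTheory ProbabilityTheory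
open scoped ENNReal NNReal

/-- The Lévy concentration function `Q_h(μ) = sup_x μ((x, x+h])`. -/
noncomputable def conc (μ : Measure ℝ) (h : ℝ) : ℝ≥0∞ :=
  ⨆ x : ℝ, μ (Set.Ioc x (x + h))

/-- `nu k` is the uniform distribution on the arithmetic progression `{-k+1, -k+3, …, k-1}`. -/
noncomputable def nu (k : ℕ) : Measure ℝ :=
  (k : ℝ≥0∞)⁻¹ • ∑ i ∈ Finset.range k, Measure.dirac (2 * (i : ℝ) - k + 1)

instance nu_fin (k : ℕ) : IsFiniteMeasure (nu k) := by
  constructor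
  rw [nu, Measure.smul_apply, Measure.coe_finset_sum, Finset.sum_apply]
  simp only [Measure.dirac_apply' _ MeasurableSet.univ, Set.indicator_univ, Pi.one_apply,
    Finset.sum_const, Finset.card_range, smul_eq_mul, nsmul_eq_mul, mul_one]
  rcases Nat.eq_zero_or_pos k with h | h
  · simp [h]
  · rw [ENNReal.inv_mul_cancel (by exact_mod_cast h.ne' : (k:ℝ≥0∞) ≠ 0) (by simp)]
    exact ENNReal.one_lt_top

/-!
Both sides are `∏ kᵢ⁻¹` times the number of points of a box `∏ sᵢ` whose coordinate sum lies in
a window of length `2ℓ`. Say that `N` is dominated by `M` if `∑ⱼ N (cⱼ) ≤ ∑ⱼ M (2j - R + 1)` for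
every sequence `c₀, …, c_{R-1}` with gaps at least `2`. For `n = 0` the count is the indicator of
`[-ℓ, ℓ)`, which dominates itself: such a window holds at most `ℓ` terms of a 2-spaced sequence
and exactly `min R ℓ` points of the centred progression. Domination survives convolving `N` with
a 2-separated set `a₀ < ⋯ < a_{K-1}` and `M` with the centred progression of `K` points: the grid
of differences `cⱼ - aᵢ` peels into hooks, each a 2-spaced sequence whose counterpart is again a
centred progression. Induction on `n`, evaluated at `R = 1`, gives the theorem.
-/

open Finset

noncomputable def centeredAP (R j : ℕ) : ℝ := 2 * j - R + 1

def TwoSpaced (c : ℕ → ℝ) (R : ℕ) : Prop := ∀ q, q + 1 < R → c q + 2 ≤ c (q + 1)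

namespace TwoSpaced

variable {c : ℕ → ℝ} {R : ℕ}

lemma mono (hc : TwoSpaced c R) {R' : ℕ} (hR : R' ≤ R) : TwoSpaced c R' :=
  fun q hq => hc q (by omega)

lemma add_two_mul_le (hc : TwoSpaced c R) {p d : ℕ} (hpd : p + d < R) :
    c p + 2 * d ≤ c (p + d) := by
  induction d with
  | zero => simp
  | succ d ih =>
    rw [← add_assoc]
    push_cast
    linarith [ih (by omega), hc (p + d) (by omega)]

lemma strictMonoOn (hc : TwoSpaced c R) : StrictMonoOn c (range R) := by
  intro i hi j hj hij
  simp only [coe_range, Set.mem_Iio] at hj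
  have := hc.add_two_mul_le (p := i) (d := j - i) (by omega)
  rw [Nat.add_sub_cancel' hij.le] at this
  have : (1 : ℝ) ≤ ((j - i : ℕ) : ℝ) := by exact_mod_cast (by omega : 1 ≤ j - i)
  linarith

lemma sum_image {β : Type*} [AddCommMonoid β] (hc : TwoSpaced c R) (f : ℝ → β) :
    ∑ y ∈ (range R).image c, f y = ∑ j ∈ range R, f (c j) :=
  Finset.sum_image hc.strictMonoOn.injOn

end TwoSpaced

lemma twoSpaced_centeredAP (R : ℕ) : TwoSpaced (centeredAP R) R := fun q _ => by
  simp only [centeredAP]; push_cast; linarith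

lemma exists_twoSpaced_image_eq {t : Finset ℝ} (ht : (t : Set ℝ).Pairwise fun a b => 2 ≤ |a - b|) :
    ∃ a : ℕ → ℝ, TwoSpaced a #t ∧ (range #t).image a = t := by
  set e := t.orderEmbOfFin rfl
  refine ⟨fun i => if h : i < #t then e ⟨i, h⟩ else 0, fun q hq => ?_, ?_⟩
  · have hlt : e ⟨q, by omega⟩ < e ⟨q + 1, hq⟩ := e.strictMono (by simp [Fin.lt_def])
    have hsep : 2 ≤ |e ⟨q, _⟩ - e ⟨q + 1, hq⟩| :=
      ht (t.orderEmbOfFin_mem rfl _) (t.orderEmbOfFin_mem rfl _) hlt.ne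
    rw [abs_sub_comm, abs_of_pos (sub_pos.2 hlt)] at hsep
    simp only [dif_pos hq, dif_pos (show q < #t by omega)]
    linarith
  · ext y
    simp only [mem_image, mem_range]
    constructor
    · rintro ⟨i, hi, rfl⟩
      simp only [dif_pos hi]
      exact t.orderEmbOfFin_mem rfl _
    · intro hy
      obtain ⟨i, rfl⟩ : y ∈ Set.range e := by rw [t.range_orderEmbOfFin]; exact hy
      exact ⟨i, i.2, by simp⟩

-- The outer hook of the `(R+1) × (K+1)` grid, in the order along which `c j - a i` increases.
def hook (R K q : ℕ) : ℕ × ℕ := if q ≤ R then (q, K) else (R, R + K - q)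

lemma sum_range_succ_sum_range_succ_eq_add_hook {β : Type*} [AddCommMonoid β] (g : ℕ → ℕ → β)
    (R K : ℕ) :
    ∑ j ∈ range (R + 1), ∑ i ∈ range (K + 1), g j i =
      ∑ j ∈ range R, ∑ i ∈ range K, g j i +
        ∑ q ∈ range (R + 1 + K), g (hook R K q).1 (hook R K q).2 := by
  have hhook : ∑ q ∈ range (R + 1 + K), g (hook R K q).1 (hook R K q).2 =
      ∑ j ∈ range (R + 1), g j K + ∑ i ∈ range K, g R i := by
    rw [sum_range_add, ← sum_range_reflect (g R) K]
    congr 1 <;> refine sum_congr rfl fun q hq => ?_ <;> rw [mem_range] at hq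
    · simp [hook, show q ≤ R by omega]
    · simp only [hook, if_neg (show ¬R + 1 + q ≤ R by omega)]
      congr 1
      omega
  rw [hhook]
  simp only [sum_range_succ, sum_add_distrib]
  abel

lemma TwoSpaced.sub_hook {a c : ℕ → ℝ} {K R : ℕ} (ha : TwoSpaced a (K + 1))
    (hc : TwoSpaced c (R + 1)) :
    TwoSpaced (fun q => c (hook R K q).1 - a (hook R K q).2) (R + 1 + K) := by
  intro q hq
  simp only [hook]
  split_ifs with h₁ h₂ h₂
  · linarith [hc q (by omega)]
  · obtain rfl : q = R := by omega
    obtain ⟨K, rfl⟩ : ∃ K', K = K' + 1 := ⟨K - 1, by omega⟩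
    simp only [show q + (K + 1) - (q + 1) = K by omega]
    linarith [ha K (by omega)]
  · omega
  · have := ha (R + K - (q + 1)) (by omega)
    rw [show R + K - (q + 1) + 1 = R + K - q by omega] at this
    linarith

lemma centeredAP_succ_sub_centeredAP_succ (R K j i : ℕ) :
    centeredAP (R + 1) j - centeredAP (K + 1) i = centeredAP R j - centeredAP K i := by
  simp only [centeredAP]; push_cast; ring

lemma centeredAP_sub_centeredAP_hook {R K q : ℕ} (hq : q < R + 1 + K) :
    centeredAP R (hook R K q).1 - centeredAP K (hook R K q).2 = centeredAP (R + 1 + K) q := by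
  unfold hook centeredAP
  split_ifs
  · push_cast; ring
  · rw [Nat.cast_sub (by omega)]; push_cast; ring

section Domination

variable {β : Type*} [AddCommMonoid β] [PartialOrder β]

def APDominated (N M : ℝ → β) : Prop :=
  ∀ (R : ℕ) (c : ℕ → ℝ), TwoSpaced c R →
    ∑ j ∈ range R, N (c j) ≤ ∑ j ∈ range R, M (centeredAP R j)

lemma APDominated.le_apply_zero {N M : ℝ → β} (h : APDominated N M) (x : ℝ) : N x ≤ M 0 := by
  simpa [centeredAP] using h 1 (fun _ => x) (fun q hq => by omega)

theorem APDominated.sum_sub [IsOrderedAddMonoid β] {N M : ℝ → β} (h : APDominated N M)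
    {a : ℕ → ℝ} {K : ℕ} (ha : TwoSpaced a K) :
    APDominated (fun x => ∑ i ∈ range K, N (x - a i))
      (fun x => ∑ i ∈ range K, M (x - centeredAP K i)) := by
  induction K with
  | zero => intro R c _; simp
  | succ K ih =>
    rintro (_ | R) c hc
    · simp
    have hgrid := ih (ha.mono K.le_succ) R c (hc.mono R.le_succ)
    have hhook := h (R + 1 + K) _ (ha.sub_hook hc)
    calc ∑ j ∈ range (R + 1), ∑ i ∈ range (K + 1), N (c j - a i)
        = ∑ j ∈ range R, ∑ i ∈ range K, N (c j - a i) +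
            ∑ q ∈ range (R + 1 + K), N (c (hook R K q).1 - a (hook R K q).2) :=
          sum_range_succ_sum_range_succ_eq_add_hook (fun j i => N (c j - a i)) R K
      _ ≤ ∑ j ∈ range R, ∑ i ∈ range K, M (centeredAP R j - centeredAP K i) +
            ∑ q ∈ range (R + 1 + K), M (centeredAP (R + 1 + K) q) := add_le_add hgrid hhook
      _ = ∑ j ∈ range (R + 1), ∑ i ∈ range (K + 1),
            M (centeredAP (R + 1) j - centeredAP (K + 1) i) := by
          rw [sum_range_succ_sum_range_succ_eq_add_hook]
          simp_rw [centeredAP_succ_sub_centeredAP_succ]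
          congr 1
          exact sum_congr rfl fun q hq => by rw [centeredAP_sub_centeredAP_hook (mem_range.1 hq)]

end Domination

lemma TwoSpaced.card_filter_mem_Ico_le {c : ℕ → ℝ} {R : ℕ} (hc : TwoSpaced c R) (u : ℝ) (ℓ : ℕ) :
    #{j ∈ range R | c j ∈ Set.Ico u (u + 2 * ℓ)} ≤ ℓ := by
  set S := {j ∈ range R | c j ∈ Set.Ico u (u + 2 * ℓ)}
  rcases S.eq_empty_or_nonempty with hS | hS
  · simp [hS]
  have hmin := mem_filter.1 (S.min'_mem hS)
  calc #S ≤ #(Ico (S.min' hS) (S.min' hS + ℓ)) := card_le_card fun j hj => by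
        have hj' := mem_filter.1 hj
        simp only [mem_range, Set.mem_Ico] at hmin hj'
        refine mem_Ico.2 ⟨S.min'_le j hj, Nat.lt_of_not_le fun hjℓ => ?_⟩
        have := hc.add_two_mul_le (p := S.min' hS) (d := j - S.min' hS) (by omega)
        rw [Nat.add_sub_cancel' (S.min'_le j hj)] at this
        have : (ℓ : ℝ) ≤ ((j - S.min' hS : ℕ) : ℝ) := by exact_mod_cast (by omega)
        linarith
    _ = ℓ := by simp

lemma min_le_card_filter_centeredAP_mem_Ico (R ℓ : ℕ) :
    min R ℓ ≤ #{j ∈ range R | centeredAP R j ∈ Set.Ico (-(ℓ : ℝ)) ℓ} := by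
  calc min R ℓ = #(Ico ((R - ℓ) / 2) ((R - ℓ) / 2 + min R ℓ)) := by simp
    _ ≤ _ := card_le_card fun j hj => by
      rw [mem_Ico] at hj
      have h₁ : ((R : ℕ) : ℝ) ≤ ((2 * j + 1 + ℓ : ℕ) : ℝ) := by exact_mod_cast (by omega)
      have h₂ : ((2 * j + 1 : ℕ) : ℝ) < ((R + ℓ : ℕ) : ℝ) := by exact_mod_cast (by omega)
      push_cast at h₁ h₂
      simp only [mem_filter, mem_range, Set.mem_Ico, centeredAP]
      exact ⟨by omega, by linarith, by linarith⟩

lemma apDominated_indicator_Ico (ℓ : ℕ) :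
    APDominated ((Set.Ico (-(ℓ : ℝ)) ℓ).indicator 1 : ℝ → ℕ)
      ((Set.Ico (-(ℓ : ℝ)) ℓ).indicator 1) := by
  intro R c hc
  simp only [sum_indicator_eq_sum_filter, Pi.one_apply, sum_const, smul_eq_mul, mul_one]
  calc #{j ∈ range R | c j ∈ Set.Ico (-(ℓ : ℝ)) ℓ} ≤ min R ℓ := by
        refine le_min ((card_filter_le _ _).trans (card_range R).le) ?_
        simpa [two_mul, ← sub_eq_add_neg] using hc.card_filter_mem_Ico_le (-ℓ) ℓ
    _ ≤ _ := min_le_card_filter_centeredAP_mem_Ico R ℓ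

lemma Fin.sum_piFinset_succ {n : ℕ} {α β : Type*} [AddCommMonoid β] (s : Fin (n + 1) → Finset α)
    (f : (Fin (n + 1) → α) → β) :
    ∑ a ∈ Fintype.piFinset s, f a =
      ∑ y ∈ s 0, ∑ b ∈ Fintype.piFinset (Fin.tail s), f (Fin.cons y b) := by
  have := filter_piFinset_eq_map_consEquiv s (fun _ => True)
  simp only [filter_true] at this
  rw [this, sum_map, sum_product]
  rfl

noncomputable def boxCount {n : ℕ} (s : Fin n → Finset ℝ) (ℓ x : ℝ) : ℕ :=
  #{a ∈ Fintype.piFinset s | ∑ i, a i ∈ Set.Ioc (x - ℓ) (x + ℓ)}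

lemma boxCount_fin_zero (s : Fin 0 → Finset ℝ) (ℓ : ℝ) :
    boxCount s ℓ = (Set.Ico (-ℓ) ℓ).indicator 1 := by
  ext x
  simp only [boxCount, Fintype.piFinset_of_isEmpty, univ_unique, Finset.univ_eq_empty,
    sum_empty, filter_singleton, Set.mem_Ioc, Set.indicator_apply, Set.mem_Ico, Pi.one_apply]
  by_cases h : -ℓ ≤ x ∧ x < ℓ
  · rw [if_pos (by constructor <;> linarith), if_pos h]; rfl
  · rw [if_neg (by rintro ⟨h₁, h₂⟩; exact h ⟨by linarith, by linarith⟩), if_neg h]; rfl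

lemma boxCount_succ {n : ℕ} (s : Fin (n + 1) → Finset ℝ) (ℓ x : ℝ) :
    boxCount s ℓ x = ∑ y ∈ s 0, boxCount (Fin.tail s) ℓ (x - y) := by
  simp only [boxCount, card_filter, Fin.sum_piFinset_succ s, Fin.sum_cons]
  refine sum_congr rfl fun y _ => sum_congr rfl fun b _ => if_congr ?_ rfl rfl
  simp only [Set.mem_Ioc]
  constructor <;> rintro ⟨h₁, h₂⟩ <;> constructor <;> linarith

noncomputable def APset (R : ℕ) : Finset ℝ := (range R).image (centeredAP R)

lemma nu_eq_smul_sum_dirac_APset (k : ℕ) :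
    nu k = (k : ℝ≥0∞)⁻¹ • ∑ y ∈ APset k, Measure.dirac y := by
  rw [nu, APset, (twoSpaced_centeredAP k).sum_image]
  rfl

theorem apDominated_boxCount (ℓ : ℕ) {n : ℕ} (s : Fin n → Finset ℝ)
    (hs : ∀ i, (s i : Set ℝ).Pairwise fun a b => 2 ≤ |a - b|) :
    APDominated (boxCount s ℓ) (boxCount (fun i => APset #(s i)) ℓ) := by
  induction n with
  | zero =>
    rw [boxCount_fin_zero, boxCount_fin_zero]
    exact apDominated_indicator_Ico ℓ
  | succ n ih =>
    obtain ⟨a, ha, hs₀⟩ := exists_twoSpaced_image_eq (hs 0)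
    have hN : boxCount s ℓ = fun x => ∑ i ∈ range #(s 0), boxCount (Fin.tail s) ℓ (x - a i) := by
      ext x
      rw [boxCount_succ, ← ha.sum_image (fun y => boxCount (Fin.tail s) ℓ (x - y)), hs₀]
    have hM : boxCount (fun i => APset #(s i)) ℓ = fun x =>
        ∑ i ∈ range #(s 0),
          boxCount (fun i => APset #(Fin.tail s i)) ℓ (x - centeredAP #(s 0) i) := by
      ext x
      rw [boxCount_succ, APset, (twoSpaced_centeredAP _).sum_image]
      rfl
    rw [hN, hM]
    exact (ih (Fin.tail s) fun i => hs i.succ).sum_sub ha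

lemma MeasureTheory.Measure.finsetSum_dirac_apply {α : Type*} [MeasurableSpace α] (t : Finset α)
    {A : Set α} [DecidablePred (· ∈ A)] (hA : MeasurableSet A) :
    (∑ a ∈ t, Measure.dirac a) A = #{a ∈ t | a ∈ A} := by
  simp [Measure.finsetSum_apply, Measure.dirac_apply' _ hA, Set.indicator_apply]

lemma MeasureTheory.Measure.pi_eq_smul_sum_dirac {ι : Type*} [Fintype ι] [DecidableEq ι]
    {α : ι → Type*} [∀ i, MeasurableSpace (α i)] {μ : ∀ i, Measure (α i)} [∀ i, SigmaFinite (μ i)]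
    (c : ι → ℝ≥0∞) (s : ∀ i, Finset (α i)) (hμ : ∀ i, μ i = c i • ∑ y ∈ s i, Measure.dirac y) :
    Measure.pi μ = (∏ i, c i) • ∑ a ∈ Fintype.piFinset s, Measure.dirac a := by
  refine Measure.pi_eq fun B hB => ?_
  have hdirac : ∀ a : ∀ i, α i, Measure.dirac a (Set.univ.pi B) = ∏ i, Measure.dirac (a i) (B i) :=
    fun a => by
      rw [Measure.dirac_apply' _ (.univ_pi hB), ← coe_univ, Set.indicator_pi_one_apply]
      simp only [Measure.dirac_apply' _ (hB _)]
  simp only [hμ, Measure.smul_apply, Measure.finsetSum_apply, smul_eq_mul, prod_mul_distrib,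
    prod_univ_sum, hdirac]

theorem uniform_separated_concentration_general {Ω : Type*} [MeasurableSpace Ω]
    (P : Measure Ω) [IsProbabilityMeasure P]
    (n : ℕ) (k : Fin n → ℕ)
    (X : Fin n → Ω → ℝ) (hmeas : ∀ i, Measurable (X i))
    (hindep : iIndepFun X P)
    (hunif : ∀ i, ∃ s : Finset ℝ, s.card = k i ∧
      (∀ a ∈ s, ∀ b ∈ s, a ≠ b → 2 ≤ |a - b|) ∧
      P.map (X i) = ((k i : ℝ≥0∞))⁻¹ • ∑ y ∈ s, Measure.dirac y)
    (ℓ : ℕ) (x : ℝ) :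
    P {ω | (∑ i, X i ω) ∈ Set.Ioc (x - ℓ) (x + ℓ)} ≤
      (Measure.pi fun i => nu (k i)) {y | (∑ i, y i) ∈ Set.Ioc (-(ℓ : ℝ)) ℓ} := by
  choose s hcard hsep hmap using hunif
  have hwindow (z : ℝ) : MeasurableSet {y : Fin n → ℝ | ∑ i, y i ∈ Set.Ioc (z - ℓ) (z + ℓ)} :=
    measurableSet_Ioc.preimage (by fun_prop)
  have hlaw : P.map (fun ω i => X i ω) =
      (∏ i, (k i : ℝ≥0∞)⁻¹) • ∑ a ∈ Fintype.piFinset s, Measure.dirac a := by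
    rw [hindep.map_fun_eq_pi_map fun i => (hmeas i).aemeasurable]
    exact Measure.pi_eq_smul_sum_dirac _ s hmap
  have hnu : Measure.pi (fun i => nu (k i)) =
      (∏ i, (k i : ℝ≥0∞)⁻¹) • ∑ a ∈ Fintype.piFinset (fun i => APset (k i)), Measure.dirac a :=
    Measure.pi_eq_smul_sum_dirac _ _ fun i => nu_eq_smul_sum_dirac_APset (k i)
  calc P {ω | (∑ i, X i ω) ∈ Set.Ioc (x - ℓ) (x + ℓ)}
      = P.map (fun ω i => X i ω) {y | ∑ i, y i ∈ Set.Ioc (x - ℓ) (x + ℓ)} :=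
        (Measure.map_apply (by fun_prop) (hwindow x)).symm
    _ = (∏ i, (k i : ℝ≥0∞)⁻¹) * boxCount s ℓ x := by
        rw [hlaw, Measure.smul_apply, smul_eq_mul, Measure.finsetSum_dirac_apply _ (hwindow x)]
        rfl
    _ ≤ (∏ i, (k i : ℝ≥0∞)⁻¹) * boxCount (fun i => APset (k i)) ℓ 0 := by
        gcongr
        simpa [hcard] using (apDominated_boxCount ℓ s hsep).le_apply_zero x
    _ = _ := by
        rw [hnu, Measure.smul_apply, smul_eq_mul,
          Measure.finsetSum_dirac_apply _ (by simpa using hwindow 0)]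
        simp [boxCount]

/-- If X₁,…,Xₙ are independent, Xᵢ uniform on kᵢ points pairwise at distance ≥ 2, then
P(∑Xᵢ ∈ (x-ℓ, x+ℓ]) ≤ P(∑Tᵢ ∈ (-ℓ, ℓ]) where Tᵢ are independent, Tᵢ ~ ν^{kᵢ}. -/
theorem uniform_separated_concentration {Ω : Type*} [MeasurableSpace Ω]
    (P : Measure Ω) [IsProbabilityMeasure P]
    (n : ℕ) (k : Fin n → ℕ) (hk : ∀ i, 1 ≤ k i)
    (X : Fin n → Ω → ℝ) (hmeas : ∀ i, Measurable (X i))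
    (hindep : iIndepFun X P)
    (hunif : ∀ i, ∃ s : Finset ℝ, s.card = k i ∧
      (∀ a ∈ s, ∀ b ∈ s, a ≠ b → 2 ≤ |a - b|) ∧
      P.map (X i) = ((k i : ℝ≥0∞))⁻¹ • ∑ y ∈ s, Measure.dirac y)
    (ℓ : ℕ) (hℓ : 1 ≤ ℓ) (x : ℝ) :
    P {ω | (∑ i, X i ω) ∈ Set.Ioc (x - ℓ) (x + ℓ)} ≤
      (Measure.pi fun i => nu (k i)) {y | (∑ i, y i) ∈ Set.Ioc (-(ℓ : ℝ)) ℓ} :=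
  uniform_separated_concentration_general P n k X hmeas hindep hunif ℓ x
end

section
/- Let k ≥ 1 and let T₁,…,Tₙ be i.i.d. random variables each uniform on the arithmetic progression {-k+1, -k+3, …, k-1}. Then for every integer ℓ ≥ 1, Q_{2ℓ}(T₁+⋯+Tₙ) = P(T₁+⋯+Tₙ ∈ (-ℓ, ℓ]), i.e., the symmetric interval of length 2ℓ about 0 maximizes the probability among all half-open intervals of length 2ℓ. -/
open MeasureTheory ProbabilityTheory
open scoped ENNReal NNReal

lemma nu_apply (k : ℕ) {s : Set ℝ} (hs : MeasurableSet s) :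
    nu k s = (k : ℝ≥0∞)⁻¹ * ∑ i : Fin k, s.indicator 1 (2 * (i : ℝ) - k + 1) := by
  rw [nu, Measure.smul_apply, Measure.coe_finset_sum, Finset.sum_apply, smul_eq_mul,
    ← Fin.sum_univ_eq_sum_range (fun i => Measure.dirac (2 * (i : ℝ) - k + 1) s)]
  congr 1
  exact Finset.sum_congr rfl fun i _ => Measure.dirac_apply' _ hs

lemma pi_nu_eq (k n : ℕ) :
    Measure.pi (fun _ : Fin n => nu k) =
      ((k : ℝ≥0∞)^n)⁻¹ • ∑ v : Fin n → Fin k,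
        Measure.dirac (fun j => 2 * ((v j : ℕ) : ℝ) - k + 1) := by
  refine Measure.pi_eq fun s hs => ?_
  rw [Measure.smul_apply, Measure.coe_finset_sum, Finset.sum_apply, smul_eq_mul]
  have h1 : ∀ v : Fin n → Fin k,
      Measure.dirac (fun j => 2 * ((v j : ℕ) : ℝ) - k + 1) (Set.univ.pi s)
        = ∏ j : Fin n, (s j).indicator 1 (2 * ((v j : ℕ) : ℝ) - k + 1) := by
    intro v
    rw [Measure.dirac_apply' _ (MeasurableSet.univ_pi hs)]
    by_cases h : (fun j => 2 * ((v j : ℕ) : ℝ) - k + 1) ∈ Set.univ.pi s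
    · rw [Set.indicator_of_mem h]
      rw [Set.mem_univ_pi] at h
      simp [Set.indicator_of_mem (h _)]
    · rw [Set.indicator_of_notMem h]
      rw [Set.mem_univ_pi] at h
      push_neg at h
      obtain ⟨j, hj⟩ := h
      rw [eq_comm, Finset.prod_eq_zero (Finset.mem_univ j)]
      simp [Set.indicator_of_notMem hj]
  simp_rw [h1]
  have h2 : ∀ j : Fin n, nu k (s j)
      = (k : ℝ≥0∞)⁻¹ * ∑ i : Fin k, (s j).indicator 1 (2 * ((i : ℕ) : ℝ) - k + 1) :=
    fun j => nu_apply k (hs j)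
  simp_rw [h2]
  rw [Finset.prod_mul_distrib, Finset.prod_const, Finset.card_univ, Fintype.card_fin,
    Finset.prod_univ_sum (fun _ => (Finset.univ : Finset (Fin k)))
      (fun j i => (s j).indicator 1 (2 * ((i : ℕ) : ℝ) - k + 1)),
    Fintype.piFinset_univ, ← ENNReal.inv_pow]

def cnt (k n : ℕ) (m : ℤ) : ℕ :=
  (Finset.univ.filter fun v : Fin n → Fin k => (∑ j, ((v j : ℕ) : ℤ)) = m).card

lemma cnt_zero (k : ℕ) (m : ℤ) : cnt k 0 m = if m = 0 then 1 else 0 := by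
  rw [cnt]
  split_ifs with h
  · subst h
    rw [Finset.filter_true_of_mem (fun v _ => by simp)]
    simp [Finset.card_univ]
  · rw [Finset.filter_false_of_mem (fun v _ => by
      simp only [Finset.univ_eq_empty, Finset.sum_empty]
      exact fun hc => h hc.symm)]
    simp

lemma cnt_rec (k n : ℕ) (m : ℤ) :
    cnt k (n+1) m = ∑ i : Fin k, cnt k n (m - i) := by
  simp only [cnt, Finset.card_filter]
  rw [Fintype.sum_equiv ((Fin.consEquiv fun _ : Fin (n+1) => Fin k).symm)
      (fun v : Fin (n+1) → Fin k => if (∑ j, ((v j : ℕ) : ℤ)) = m then 1 else 0)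
      (fun p : Fin k × (Fin n → Fin k) =>
        if (((p.1 : ℕ) : ℤ) + ∑ j, ((p.2 j : ℕ) : ℤ)) = m then 1 else 0)
      (fun v => by
        simp only [Fin.consEquiv_symm_apply]
        congr 1
        rw [Fin.sum_univ_succ]
        rfl),
    Fintype.sum_prod_type]
  refine Finset.sum_congr rfl fun i _ => Finset.sum_congr rfl fun w _ => ?_
  congr 1
  simp only [eq_iff_iff]
  omega

lemma cnt_symm (k n : ℕ) (m : ℤ) : cnt k n m = cnt k n ((n : ℤ) * ((k : ℤ) - 1) - m) := by
  rw [cnt, cnt]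
  refine Finset.card_bij (fun v _ => Fin.rev ∘ v) ?_ ?_ ?_
  · intro v hv
    simp only [Finset.mem_filter, Finset.mem_univ, true_and] at hv ⊢
    have : ∀ j : Fin n, (((Fin.rev (v j) : Fin k) : ℕ) : ℤ) = (k : ℤ) - 1 - ((v j : ℕ) : ℤ) := by
      intro j
      have h1 := (v j).isLt
      have h2 : ((Fin.rev (v j) : Fin k) : ℕ) = k - ((v j : ℕ) + 1) := Fin.val_rev (v j)
      omega
    simp only [Function.comp_apply, this, Finset.sum_sub_distrib, hv, Finset.sum_const,
      Finset.card_univ, Fintype.card_fin, smul_eq_mul, nsmul_eq_mul]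
    ring
  · intro v₁ _ v₂ _ h
    funext j
    have := congrFun h j
    simpa using Fin.rev_injective (by simpa using this)
  · intro w hw
    refine ⟨Fin.rev ∘ w, ?_, by funext j; simp⟩
    simp only [Finset.mem_filter, Finset.mem_univ, true_and] at hw ⊢
    have : ∀ j : Fin n, (((Fin.rev (w j) : Fin k) : ℕ) : ℤ) = (k : ℤ) - 1 - ((w j : ℕ) : ℤ) := by
      intro j
      have h1 := (w j).isLt
      have h2 : ((Fin.rev (w j) : Fin k) : ℕ) = k - ((w j : ℕ) + 1) := Fin.val_rev (w j)
      omega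
    simp only [Function.comp_apply, this, Finset.sum_sub_distrib, Finset.sum_const,
      Finset.card_univ, Fintype.card_fin, smul_eq_mul, nsmul_eq_mul]
    rw [hw]
    ring

lemma mono_of_step {f : ℤ → ℕ} {C : ℤ} (hstep : ∀ m : ℤ, 2*(m+1) ≤ C → f m ≤ f (m+1)) :
    ∀ i j : ℤ, i ≤ j → 2*j ≤ C → f i ≤ f j := by
  intro i j hij hC
  refine Int.le_induction (motive := fun j _ => 2*j ≤ C → f i ≤ f j)
    (fun _ => le_rfl) ?_ j hij hC
  intro m hm ih h
  exact le_trans (ih (by omega)) (hstep m h)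

lemma anti_of_step {f : ℤ → ℕ} {C : ℤ} (hstep : ∀ m : ℤ, C ≤ 2*m → f (m+1) ≤ f m) :
    ∀ i j : ℤ, i ≤ j → C ≤ 2*i → f j ≤ f i := by
  intro i j hij hC
  refine Int.le_induction (motive := fun j _ => f j ≤ f i) le_rfl ?_ j hij
  intro m hm ih
  exact le_trans (hstep m (by omega)) ih

lemma cnt_bell (k n : ℕ) (hk : 1 ≤ k)
    (ih : ∀ i j : ℤ, i ≤ j → 2*j ≤ (n : ℤ) * ((k : ℤ) - 1) → cnt k n i ≤ cnt k n j) :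
    ∀ i j : ℤ, (2*i - (n : ℤ) * ((k : ℤ) - 1)).natAbs ≤
      (2*j - (n : ℤ) * ((k : ℤ) - 1)).natAbs → cnt k n j ≤ cnt k n i := by
  intro i j habs
  have hk' : (1:ℤ) ≤ (k:ℤ) := by exact_mod_cast hk
  have hN0 : (0:ℤ) ≤ (n : ℤ) * ((k : ℤ) - 1) := mul_nonneg (by positivity) (by omega)
  have key : ∀ m : ℤ, ∃ m', cnt k n m' = cnt k n m ∧ 2*m' ≤ (n : ℤ) * ((k : ℤ) - 1) ∧
      (2*m' - (n : ℤ) * ((k : ℤ) - 1)).natAbs = (2*m - (n : ℤ) * ((k : ℤ) - 1)).natAbs := by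
    intro m
    by_cases h : 2*m ≤ (n : ℤ) * ((k : ℤ) - 1)
    · exact ⟨m, rfl, h, rfl⟩
    · exact ⟨(n : ℤ) * ((k : ℤ) - 1) - m, (cnt_symm k n m).symm, by omega, by omega⟩
  obtain ⟨i', hi1, hi2, hi3⟩ := key i
  obtain ⟨j', hj1, hj2, hj3⟩ := key j
  rw [← hi1, ← hj1]
  exact ih j' i' (by omega) hi2

lemma cnt_mono (k n : ℕ) (hk : 1 ≤ k) :
    ∀ i j : ℤ, i ≤ j → 2*j ≤ (n : ℤ) * ((k : ℤ) - 1) → cnt k n i ≤ cnt k n j := by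
  induction n with
  | zero =>
    intro i j hij hj
    simp only [Nat.cast_zero, zero_mul] at hj
    rw [cnt_zero, cnt_zero]
    split_ifs with h1 h2 h2 <;> omega
  | succ n ih =>
    have bell := cnt_bell k n hk ih
    intro i j hij hj
    have hk' : (1:ℤ) ≤ (k:ℤ) := by exact_mod_cast hk
    have hN0 : (0:ℤ) ≤ (n : ℤ) * ((k : ℤ) - 1) := mul_nonneg (by positivity) (by omega)
    refine mono_of_step (C := ((n:ℤ)+1) * ((k:ℤ) - 1)) ?_ i j hij (by push_cast at hj; linarith)
    intro m hm
    rw [cnt_rec, cnt_rec]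
    obtain ⟨K, rfl⟩ : ∃ K, k = K + 1 := ⟨k - 1, by omega⟩
    rw [Fin.sum_univ_eq_sum_range (fun i => cnt (K+1) n (m - i)),
        Fin.sum_univ_eq_sum_range (fun i => cnt (K+1) n (m + 1 - i)),
        Finset.sum_range_succ (fun i => cnt (K+1) n (m - i)),
        Finset.sum_range_succ' (fun i => cnt (K+1) n (m + 1 - i))]
    have e1 : ∀ i ∈ Finset.range K, cnt (K+1) n (m + 1 - ((i:ℤ) + 1)) = cnt (K+1) n (m - i) := by
      intro i _
      congr 1
      ring
    rw [show (∑ i ∈ Finset.range K, cnt (K+1) n (m + 1 - ((i+1 : ℕ) : ℤ)))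
        = ∑ i ∈ Finset.range K, cnt (K+1) n (m - (i:ℤ)) from
      Finset.sum_congr rfl (fun i _ => by push_cast; congr 1; ring)]
    rw [Nat.cast_zero, sub_zero]
    refine add_le_add_right ?_ _
    refine bell (m + 1) (m - (K:ℤ)) ?_
    have hKc : ((K:ℕ):ℤ) = ((K+1:ℕ):ℤ) - 1 := by push_cast; ring
    set N : ℤ := (n : ℤ) * (((K+1:ℕ):ℤ) - 1) with hN
    have hm' : 2*(m+1) ≤ N + (((K+1:ℕ):ℤ) - 1) := by
      push_cast at hm ⊢
      push_cast [hN]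
      linarith [hm]
    have hK0 : (0:ℤ) ≤ ((K:ℕ):ℤ) := by positivity
    rw [hKc] at *
    generalize hNg : ((K+1:ℕ):ℤ) - 1 = Kz at *
    omega

lemma sum_Ioc_eq_range (f : ℤ → ℕ) (j : ℤ) (l : ℕ) :
    ∑ m ∈ Finset.Ioc j (j + (l:ℤ)), f m = ∑ i ∈ Finset.range l, f (j + 1 + i) := by
  induction l with
  | zero => simp
  | succ L ih =>
    have hset : Finset.Ioc j (j + ((L+1:ℕ):ℤ)) =
        insert (j + (L:ℤ) + 1) (Finset.Ioc j (j + (L:ℤ))) := by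
      ext m
      simp only [Finset.mem_Ioc, Finset.mem_insert]
      push_cast
      omega
    rw [hset, Finset.sum_insert (by simp only [Finset.mem_Ioc]; omega), ih,
      Finset.sum_range_succ]
    push_cast
    ring_nf

lemma window_max (k n l : ℕ) (hk : 1 ≤ k) (j js : ℤ)
    (h1 : 2*js ≤ (n : ℤ) * ((k : ℤ) - 1) - l)
    (h2 : (n : ℤ) * ((k : ℤ) - 1) - l ≤ 2*js + 1) :
    ∑ m ∈ Finset.Ioc j (j + (l:ℤ)), cnt k n m ≤
      ∑ m ∈ Finset.Ioc js (js + (l:ℤ)), cnt k n m := by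
  have bell := cnt_bell k n hk (cnt_mono k n hk)
  have hk' : (1:ℤ) ≤ (k:ℤ) := by exact_mod_cast hk
  have hN0 : (0:ℤ) ≤ (n : ℤ) * ((k : ℤ) - 1) := mul_nonneg (by positivity) (by omega)
  set N : ℤ := (n : ℤ) * ((k : ℤ) - 1) with hN
  clear_value N
  rcases Nat.eq_zero_or_pos l with rfl | hl
  · simp
  obtain ⟨L, rfl⟩ : ∃ L, l = L + 1 := ⟨l - 1, by omega⟩
  set S : ℤ → ℕ := fun j => ∑ m ∈ Finset.Ioc j (j + ((L+1:ℕ):ℤ)), cnt k n m with hS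
  show S j ≤ S js
  have hSr : ∀ j : ℤ, S j = ∑ i ∈ Finset.range (L+1), cnt k n (j + 1 + i) :=
    fun j => sum_Ioc_eq_range (cnt k n) j (L+1)
  have hsplit : ∀ j : ℤ, S j = cnt k n (j + 1) + ∑ i ∈ Finset.range L, cnt k n (j + 2 + i) := by
    intro j
    rw [hSr, Finset.sum_range_succ' (fun i => cnt k n (j + 1 + i)), add_comm]
    congr 1
    · push_cast; ring_nf
    · exact Finset.sum_congr rfl fun i _ => by push_cast; ring_nf
  have hsplit' : ∀ j : ℤ, S j = (∑ i ∈ Finset.range L, cnt k n (j + 1 + i)) + cnt k n (j + 1 + L) := by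
    intro j
    rw [hSr, Finset.sum_range_succ]
  rcases le_total j js with hle | hle
  · refine mono_of_step (f := S) (C := N - ((L:ℤ)+1)) ?_ j js hle (by push_cast at h1 ⊢; omega)
    intro m hm
    rw [hsplit m, hsplit' (m+1)]
    simp only [show ∀ i : ℤ, m + 1 + 1 + i = m + 2 + i from fun i => by ring]
    have hb : cnt k n (m+1) ≤ cnt k n (m + 2 + (L:ℤ)) := bell _ _ (by omega)
    calc cnt k n (m+1) + ∑ i ∈ Finset.range L, cnt k n (m + 2 + (i:ℤ))
        ≤ cnt k n (m + 2 + (L:ℤ)) + ∑ i ∈ Finset.range L, cnt k n (m + 2 + (i:ℤ)) :=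
          add_le_add_left hb _
      _ = ∑ i ∈ Finset.range L, cnt k n (m + 2 + (i:ℤ)) + cnt k n (m + 2 + (L:ℤ)) := add_comm _ _
  · refine anti_of_step (f := S) (C := N - ((L:ℤ)+1) - 1) ?_ js j hle (by push_cast at h2 ⊢; omega)
    intro m hm
    rw [hsplit m, hsplit' (m+1)]
    simp only [show ∀ i : ℤ, m + 1 + 1 + i = m + 2 + i from fun i => by ring]
    have hb : cnt k n (m + 2 + (L:ℤ)) ≤ cnt k n (m+1) := bell _ _ (by omega)
    calc ∑ i ∈ Finset.range L, cnt k n (m + 2 + (i:ℤ)) + cnt k n (m + 2 + (L:ℤ))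
        ≤ ∑ i ∈ Finset.range L, cnt k n (m + 2 + (i:ℤ)) + cnt k n (m+1) :=
          add_le_add_right hb _
      _ = cnt k n (m+1) + ∑ i ∈ Finset.range L, cnt k n (m + 2 + (i:ℤ)) := add_comm _ _

lemma measurable_sum_fn (n : ℕ) : Measurable (fun y : Fin n → ℝ => ∑ i, y i) :=
  Finset.measurable_sum Finset.univ (fun i _ => measurable_pi_apply i)

open Classical in
lemma pi_apply_cnt (k n l : ℕ) {s : Set ℝ} (hs : MeasurableSet s) (j : ℤ)
    (hj : ∀ m : ℤ, (((2*m - (n:ℤ)*((k:ℤ)-1) : ℤ) : ℝ) ∈ s ↔ m ∈ Finset.Ioc j (j + (l:ℤ)))) :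
    (Measure.pi fun _ : Fin n => nu k) {y | (∑ i, y i) ∈ s}
      = ((k : ℝ≥0∞)^n)⁻¹ * ((∑ m ∈ Finset.Ioc j (j + (l:ℤ)), cnt k n m : ℕ) : ℝ≥0∞) := by
  have hA : MeasurableSet {y : Fin n → ℝ | (∑ i, y i) ∈ s} := (measurable_sum_fn n) hs
  rw [pi_nu_eq, Measure.smul_apply, Measure.coe_finset_sum, Finset.sum_apply, smul_eq_mul]
  congr 1
  have hval : ∀ v : Fin n → Fin k,
      (∑ j : Fin n, (2 * ((v j : ℕ) : ℝ) - k + 1))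
        = (((2 * (∑ j : Fin n, ((v j : ℕ) : ℤ)) - (n:ℤ)*((k:ℤ)-1) : ℤ)) : ℝ) := by
    intro v
    push_cast
    rw [Finset.sum_add_distrib, Finset.sum_sub_distrib]
    simp [Finset.mul_sum]
    ring
  have h1 : ∀ v : Fin n → Fin k,
      Measure.dirac (fun j => 2 * ((v j : ℕ) : ℝ) - k + 1) {y : Fin n → ℝ | (∑ i, y i) ∈ s}
        = if (∑ j : Fin n, ((v j : ℕ) : ℤ)) ∈ Finset.Ioc j (j + (l:ℤ)) then 1 else 0 := by
    intro v
    rw [Measure.dirac_apply' _ hA, Set.indicator_apply]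
    simp only [Set.mem_setOf_eq, Pi.one_apply]
    congr 1
    rw [hval v, hj]
  simp_rw [h1]
  rw [show (∑ v : Fin n → Fin k,
        if (∑ j : Fin n, ((v j : ℕ) : ℤ)) ∈ Finset.Ioc j (j + (l:ℤ)) then (1:ℝ≥0∞) else 0)
      = ((Finset.univ.filter fun v : Fin n → Fin k =>
          (∑ j : Fin n, ((v j : ℕ) : ℤ)) ∈ Finset.Ioc j (j + (l:ℤ))).card : ℝ≥0∞) by
    rw [Finset.card_filter]
    push_cast
    exact Finset.sum_congr rfl fun v _ => by split_ifs <;> simp]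
  congr 1
  rw [Finset.card_eq_sum_card_fiberwise
    (f := fun v : Fin n → Fin k => ∑ j : Fin n, ((v j : ℕ) : ℤ))
    (s := Finset.univ.filter fun v : Fin n → Fin k =>
      (∑ j : Fin n, ((v j : ℕ) : ℤ)) ∈ Finset.Ioc j (j + (l:ℤ)))
    (t := Finset.Ioc j (j + (l:ℤ))) (fun v hv => (Finset.mem_filter.mp hv).2)]
  refine Finset.sum_congr rfl fun m hm => ?_
  rw [cnt]
  congr 1
  rw [Finset.filter_filter]
  refine Finset.filter_congr fun v _ => ?_
  constructor
  · exact fun h => h.2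
  · intro h
    refine ⟨?_, h⟩
    show (∑ j : Fin n, ((v j : ℕ) : ℤ)) ∈ Finset.Ioc j (j + (l:ℤ))
    rw [h]
    exact hm

lemma mem_window_iff (N : ℤ) (l : ℕ) (x : ℝ) (m : ℤ) :
    (((2*m - N : ℤ):ℝ) ∈ Set.Ioc x (x + 2*(l:ℝ))) ↔
      m ∈ Finset.Ioc ⌊(x + (N:ℝ))/2⌋ (⌊(x + (N:ℝ))/2⌋ + (l:ℤ)) := by
  rw [Set.mem_Ioc, Finset.mem_Ioc]
  constructor
  · rintro ⟨h1, h2⟩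
    push_cast at h1 h2
    refine ⟨Int.floor_lt.mpr (by push_cast; linarith), ?_⟩
    have h3 : ((m - l : ℤ):ℝ) ≤ (x + (N:ℝ))/2 := by push_cast; linarith
    have h4 := Int.le_floor.mpr h3
    omega
  · rintro ⟨h1, h2⟩
    have h3 : (x + (N:ℝ))/2 < ((m:ℤ):ℝ) := Int.floor_lt.mp h1
    have h4 : ((m - l : ℤ):ℝ) ≤ (x + (N:ℝ))/2 := Int.le_floor.mp (by omega)
    push_cast at h3 h4
    push_cast
    constructor <;> linarith


/-- For i.i.d. Tᵢ uniform on {-k+1, -k+3, …, k-1}, the concentration function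
Q_{2ℓ} of T₁+⋯+Tₙ is attained at the symmetric interval (-ℓ, ℓ]. -/
theorem conc_iid_uniform_attained (k : ℕ) (hk : 1 ≤ k) (n : ℕ) (ℓ : ℕ) (hℓ : 1 ≤ ℓ) :
    conc ((Measure.pi fun _ : Fin n => nu k).map (fun y => ∑ i, y i)) (2 * ℓ) =
      (Measure.pi fun _ : Fin n => nu k) {y | (∑ i, y i) ∈ Set.Ioc (-(ℓ : ℝ)) ℓ} := by
  have hk' : (1:ℤ) ≤ (k:ℤ) := by exact_mod_cast hk
  set N : ℤ := (n:ℤ)*((k:ℤ)-1) with hN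
  have hN0 : (0:ℤ) ≤ N := mul_nonneg (by positivity) (by omega)
  set js : ℤ := ⌊((-(ℓ:ℝ)) + (N:ℝ))/2⌋ with hjs
  have hjs1 : 2*js ≤ N - ℓ := by
    have := Int.floor_le (((-(ℓ:ℝ)) + (N:ℝ))/2)
    rw [← hjs] at this
    have h2 : (2*js : ℝ) ≤ (N:ℝ) - (ℓ:ℝ) := by push_cast at this ⊢; linarith
    exact_mod_cast h2
  have hjs2 : N - ℓ ≤ 2*js + 1 := by
    have := Int.lt_floor_add_one (((-(ℓ:ℝ)) + (N:ℝ))/2)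
    rw [← hjs] at this
    have h2 : ((N:ℝ) - (ℓ:ℝ)) < (2*js : ℝ) + 2 := by push_cast at this ⊢; linarith
    have h3 : (N - ℓ : ℤ) < 2*js + 2 := by exact_mod_cast h2
    omega
  have htarget : Set.Ioc (-(ℓ:ℝ)) ((-(ℓ:ℝ)) + 2*(ℓ:ℝ)) = Set.Ioc (-(ℓ:ℝ)) (ℓ:ℝ) := by
    congr 1
    ring
  have hT : (Measure.pi fun _ : Fin n => nu k) {y | (∑ i, y i) ∈ Set.Ioc (-(ℓ:ℝ)) (ℓ:ℝ)}
      = ((k : ℝ≥0∞)^n)⁻¹ * ((∑ m ∈ Finset.Ioc js (js + (ℓ:ℤ)), cnt k n m : ℕ) : ℝ≥0∞) := by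
    have := pi_apply_cnt k n ℓ (s := Set.Ioc (-(ℓ:ℝ)) ((-(ℓ:ℝ)) + 2*(ℓ:ℝ)))
      measurableSet_Ioc js (fun m => mem_window_iff N ℓ (-(ℓ:ℝ)) m)
    rw [htarget] at this
    exact this
  apply le_antisymm
  · simp only [conc]
    refine iSup_le fun x => ?_
    rw [Measure.map_apply (measurable_sum_fn n) measurableSet_Ioc]
    have hpre : (fun y : Fin n → ℝ => ∑ i, y i) ⁻¹' Set.Ioc x (x + 2*(ℓ:ℝ))
        = {y | (∑ i, y i) ∈ Set.Ioc x (x + 2*(ℓ:ℝ))} := rfl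
    rw [hpre, pi_apply_cnt k n ℓ measurableSet_Ioc ⌊(x + (N:ℝ))/2⌋
      (fun m => mem_window_iff N ℓ x m), hT]
    refine mul_le_mul_right ?_ _
    exact_mod_cast window_max k n ℓ hk ⌊(x + (N:ℝ))/2⌋ js hjs1 hjs2
  · simp only [conc]
    refine le_trans (le_of_eq ?_) (le_iSup _ (-(ℓ:ℝ)))
    rw [Measure.map_apply (measurable_sum_fn n) measurableSet_Ioc, htarget]
    rfl
end
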